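/- Let X₁, X₂, ... be i.i.d. Bernoulli(p) random variables with p ∈ (0,1], let A₁, A₂, ... be i.i.d. Exponential(1) random variables independent of the X's, let k ≥ 2 be an integer, and let T = min{n : X₁ + ... + X_n = k}. Then R = A₁ + ... + A_T has the Gamma distribution with shape k and rate p, and consequently p·R/(k-1) ~ Gamma(k, k-1) and the estimator p̂ = (k-1)/R satisfies E[p̂] = p. -/

import Mathlib

/-!
Given `T = m + 1`, `R` is a sum of `m + 1` independent `Exp(1)` variables, and `T` depends only on
the `X`'s, so the conditional law of `R` is `Gamma(m + 1, 1)`. The hitting time is negative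
binomial: `T = m + 1` means `k - 1` successes among the first `m` trials and a success at trial
`m + 1`, so `P(T = m + 1) = C(m, k - 1) p^k (1 - p)^(m - k + 1)`. By the exponential series,
`∑ₘ C(m, k - 1) p^k (1 - p)^(m - k + 1) x^m e^(-x) / m! = p^k x^(k - 1) e^(-p x) / (k - 1)!`,
which is the `Gamma(k, p)` density. Scaling gives `p R / (k - 1) ~ Gamma(k, k - 1)`, and
`E[1 / Y] = r / (a - 1)` for `Y ~ Gamma(a, r)` gives `E[(k - 1) / R] = p`.
-/

open MeasureTheory ProbabilityTheory Real Set Finset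
open scoped Nat ENNReal

theorem measurable_gammaPDF (a r : ℝ) : Measurable (gammaPDF a r) :=
  (measurable_gammaPDFReal a r).ennreal_ofReal

theorem gammaPDF_natCast_add_one {r x : ℝ} (n : ℕ) (hx : 0 ≤ x) :
    gammaPDF (n + 1) r x = ENNReal.ofReal (r ^ (n + 1) * x ^ n * exp (-(r * x)) / n !) := by
  rw [gammaPDF_of_nonneg hx, Gamma_nat_eq_factorial, add_sub_cancel_right, rpow_natCast,
    ← Nat.cast_add_one, rpow_natCast]
  ring_nf

theorem integral_gammaPDFReal_eq_one {a r : ℝ} (ha : 0 < a) (hr : 0 < r) :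
    ∫ x, gammaPDFReal a r x = 1 := by
  rw [integral_eq_lintegral_of_nonneg_ae (ae_of_all _ (gammaPDFReal_nonneg ha hr))
    (measurable_gammaPDFReal a r).aestronglyMeasurable]
  have h := lintegral_gammaPDF_eq_one ha hr
  simp only [gammaPDF] at h
  rw [h, ENNReal.toReal_one]

theorem gammaPDF_mul_gammaPDF_one {a r : ℝ} (ha : 0 < a) (hr : 0 < r) (u : ℝ) :
    (fun y => gammaPDF a r y * gammaPDF 1 r (-y + u)) = (Icc 0 u).indicator
      fun y => ENNReal.ofReal (r ^ (a + 1) / Gamma a * exp (-(r * u)) * y ^ (a - 1)) := by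
  ext y
  by_cases hy : 0 ≤ y
  · by_cases hyu : y ≤ u
    · rw [indicator_of_mem (show y ∈ Icc 0 u from ⟨hy, hyu⟩), gammaPDF_of_nonneg hy,
        gammaPDF_of_nonneg (by linarith), ← ENNReal.ofReal_mul (by positivity),
        rpow_add_one hr.ne']
      congr 1
      have : exp (-(r * y)) * exp (-(r * (-y + u))) = exp (-(r * u)) := by
        rw [← exp_add]; ring_nf
      simp only [Gamma_one, rpow_one, sub_self, rpow_zero, div_one, mul_one]
      linear_combination (r ^ a / Gamma a * y ^ (a - 1) * r) * this
    · simp [gammaPDF_of_neg (by linarith : -y + u < 0), hyu]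
  · simp [gammaPDF_of_neg (not_le.1 hy), hy]

theorem gammaPDF_lconvolution_gammaPDF_one {a r : ℝ} (ha : 0 < a) (hr : 0 < r) (u : ℝ) :
    (gammaPDF a r ⋆ₗ gammaPDF 1 r) u = gammaPDF (a + 1) r u := by
  rw [lconvolution_def, gammaPDF_mul_gammaPDF_one ha hr, lintegral_indicator measurableSet_Icc]
  rcases lt_or_ge u 0 with hu | hu
  · simp [Icc_eq_empty_of_lt hu, gammaPDF_of_neg hu]
  rw [← ofReal_integral_eq_lintegral_ofReal, integral_Icc_eq_integral_Ioc,
    ← intervalIntegral.integral_of_le hu, intervalIntegral.integral_const_mul,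
    integral_rpow (by left; linarith), gammaPDF_of_nonneg hu, Gamma_add_one ha.ne']
  · rw [sub_add_cancel, add_sub_cancel_right, zero_rpow ha.ne', sub_zero]
    field_simp
  · change IntegrableOn _ (Icc 0 u)
    rw [integrableOn_Icc_iff_integrableOn_Ioc,
      ← intervalIntegrable_iff_integrableOn_Ioc_of_le hu]
    exact (intervalIntegral.intervalIntegrable_rpow' (by linarith)).const_mul _
  · exact (ae_restrict_iff' measurableSet_Icc).2 (ae_of_all _ fun y hy => by
      have := hy.1; positivity)

theorem gammaMeasure_conv_expMeasure {a r : ℝ} (ha : 0 < a) (hr : 0 < r) :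
    gammaMeasure a r ∗ expMeasure r = gammaMeasure (a + 1) r := by
  rw [gammaMeasure, expMeasure, gammaMeasure, conv_withDensity_eq_lconvolution
    (measurable_gammaPDF a r) (measurable_gammaPDF 1 r),
    funext (gammaPDF_lconvolution_gammaPDF_one ha hr), gammaMeasure]

theorem ofReal_inv_mul_gammaPDF {a r c : ℝ} (hr : 0 < r) (hc : 0 < c) (u : ℝ) :
    ENNReal.ofReal c⁻¹ * gammaPDF a r (c⁻¹ * u) = gammaPDF a (r / c) u := by
  rcases lt_or_ge u 0 with hu | hu
  · rw [gammaPDF_of_neg hu, gammaPDF_of_neg (by nlinarith [inv_pos.2 hc]), mul_zero]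
  rw [gammaPDF_of_nonneg hu, gammaPDF_of_nonneg (by positivity),
    ← ENNReal.ofReal_mul (by positivity)]
  congr 1
  rw [mul_rpow (by positivity) hu, div_rpow hr.le hc.le, inv_rpow hc.le,
    rpow_sub_one hc.ne', div_eq_mul_inv r c]
  field_simp

theorem gammaMeasure_map_const_mul {a r c : ℝ} (hr : 0 < r) (hc : 0 < c) :
    (gammaMeasure a r).map (c * ·) = gammaMeasure a (r / c) := by
  refine Measure.ext_of_lintegral _ fun f hf => ?_
  have hg : Measurable fun u => gammaPDF a r (c⁻¹ * u) * f u :=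
    ((measurable_gammaPDF a r).comp (measurable_const_mul _)).mul hf
  have hsubst := lintegral_map hg (measurable_const_mul c) (μ := volume)
  rw [Real.map_volume_mul_left hc.ne', lintegral_smul_measure, abs_inv, abs_of_pos hc,
    smul_eq_mul, ← lintegral_const_mul _ hg] at hsubst
  simp_rw [inv_mul_cancel_left₀ hc.ne', ← mul_assoc, ofReal_inv_mul_gammaPDF hr hc] at hsubst
  rw [lintegral_map hf (measurable_const_mul c), gammaMeasure, gammaMeasure,
    lintegral_withDensity_eq_lintegral_mul _ (measurable_gammaPDF a r)
      (by fun_prop : Measurable fun x => f (c * x)),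
    lintegral_withDensity_eq_lintegral_mul _ (measurable_gammaPDF _ _) hf]
  exact hsubst.symm

theorem gammaPDFReal_mul_inv {a r x : ℝ} (ha : 1 < a) (hr : 0 < r) (hx : x ≠ 0) :
    gammaPDFReal a r x * x⁻¹ = r / (a - 1) * gammaPDFReal (a - 1) r x := by
  rcases hx.lt_or_gt with hx | hx
  · simp [gammaPDFReal, not_le.2 hx]
  have hΓ : Gamma a = (a - 1) * Gamma (a - 1) := by
    simpa using Gamma_add_one (s := a - 1) (by linarith)
  simp only [gammaPDFReal, if_pos hx.le, hΓ]
  rw [rpow_sub_one hx.ne' (a - 1), rpow_sub_one hr.ne' a]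
  have := Gamma_pos_of_pos (by linarith : 0 < a - 1)
  field_simp

theorem integral_inv_gammaMeasure {a r : ℝ} (ha : 1 < a) (hr : 0 < r) :
    ∫ x, x⁻¹ ∂gammaMeasure a r = r / (a - 1) := by
  rw [gammaMeasure, integral_withDensity_eq_integral_toReal_smul (measurable_gammaPDF a r)
    (ae_of_all _ fun _ => ENNReal.ofReal_lt_top)]
  calc ∫ x, (gammaPDF a r x).toReal • x⁻¹
      = ∫ x, r / (a - 1) * gammaPDFReal (a - 1) r x := by
        refine integral_congr_ae ?_
        filter_upwards [compl_mem_ae_iff.2 (measure_singleton (0 : ℝ))] with x hx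
        rw [gammaPDF, ENNReal.toReal_ofReal (gammaPDFReal_nonneg (by linarith) hr x), smul_eq_mul,
          gammaPDFReal_mul_inv ha hr hx]
    _ = r / (a - 1) := by
        rw [integral_const_mul, integral_gammaPDFReal_eq_one (by linarith) hr, mul_one]

theorem tsum_choose_mul_gammaPDF {p : ℝ} (hp0 : 0 ≤ p) (hp1 : p ≤ 1) {k : ℕ} (hk : 1 ≤ k) (x : ℝ) :
    ∑' m : ℕ, (m.choose (k - 1) : ℝ≥0∞) * ENNReal.ofReal p ^ k *
      ENNReal.ofReal (1 - p) ^ (m - (k - 1)) * gammaPDF (m + 1) 1 x = gammaPDF k p x := by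
  rcases lt_or_ge x 0 with hx | hx
  · simp [gammaPDF_of_neg hx]
  obtain ⟨j, rfl⟩ : ∃ j, k = j + 1 := ⟨k - 1, by omega⟩
  simp only [add_tsub_cancel_right]
  have hterm : ∀ i, ((i + j).choose j : ℝ≥0∞) * ENNReal.ofReal p ^ (j + 1) *
      ENNReal.ofReal (1 - p) ^ (i + j - j) * gammaPDF ((i + j : ℕ) + 1) 1 x =
      ENNReal.ofReal (p ^ (j + 1) * x ^ j * exp (-x) / j ! * (((1 - p) * x) ^ i / i !)) := by
    intro i
    rw [gammaPDF_natCast_add_one _ hx, add_tsub_cancel_right,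
      ← ENNReal.ofReal_natCast, ← ENNReal.ofReal_pow hp0, ← ENNReal.ofReal_pow (by linarith),
      ← ENNReal.ofReal_mul (by positivity), ← ENNReal.ofReal_mul (by positivity),
      ← ENNReal.ofReal_mul (by positivity)]
    congr 1
    have hc : ((i + j).choose j : ℝ) * i ! * j ! = (i + j)! := by
      exact_mod_cast Nat.add_choose_mul_factorial_mul_factorial i j
    have hC : ((i + j).choose j : ℝ) ≠ 0 := by exact_mod_cast (Nat.choose_pos (by omega)).ne'
    rw [← hc, one_pow, one_mul, pow_add x, mul_pow]
    field_simp
  rw [← ENNReal.summable.sum_add_tsum_nat_add' (k := j), sum_eq_zero fun i hi => by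
      simp [Nat.choose_eq_zero_of_lt (mem_range.1 hi)], zero_add]
  simp_rw [hterm]
  rw [← ENNReal.ofReal_tsum_of_nonneg (fun i => by
    have : 0 ≤ 1 - p := by linarith
    positivity) ((Real.summable_pow_div_factorial _).mul_left _),
    tsum_mul_left, ← congrFun (exp_eq_exp_ℝ.trans NormedSpace.exp_eq_tsum_div),
    Nat.cast_add_one, gammaPDF_natCast_add_one _ hx]
  congr 1
  have : exp (-x) * exp ((1 - p) * x) = exp (-(p * x)) := by rw [← exp_add]; ring_nf
  linear_combination p ^ (j + 1) * x ^ j / j ! * this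

theorem sum_choose_smul_gammaMeasure {p : ℝ} (hp0 : 0 ≤ p) (hp1 : p ≤ 1) {k : ℕ} (hk : 1 ≤ k) :
    Measure.sum (fun m : ℕ => ((m.choose (k - 1) : ℝ≥0∞) * ENNReal.ofReal p ^ k *
      ENNReal.ofReal (1 - p) ^ (m - (k - 1))) • gammaMeasure (m + 1) 1) = gammaMeasure k p := by
  simp_rw [gammaMeasure, ← withDensity_smul _ (measurable_gammaPDF _ _)]
  rw [← withDensity_tsum fun m => (measurable_gammaPDF _ _).const_smul _]
  congr 1
  ext x
  rw [ENNReal.tsum_apply]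
  exact tsum_choose_mul_gammaPDF hp0 hp1 hk x

theorem ProbabilityTheory.iIndepFun.indepFun_fun_sum_range {Ω β : Type*} [MeasurableSpace Ω]
    {P : Measure Ω} [MeasurableSpace β] [AddCommMonoid β] [MeasurableAdd₂ β] {f : ℕ → Ω → β}
    (h : iIndepFun f P) (hf : ∀ n, Measurable (f n)) (n : ℕ) :
    IndepFun (fun ω => ∑ i ∈ range n, f i ω) (f n) P := by
  simpa only [Finset.sum_fn] using h.indepFun_finsetSum_of_notMem hf notMem_range_self

theorem ProbabilityTheory.iIndepFun.indepFun_sumElim {Ω ι κ β : Type*} [MeasurableSpace Ω]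
    {μ : Measure Ω} [MeasurableSpace β] {f : ι → Ω → β} {g : κ → Ω → β}
    (h : iIndepFun (Sum.elim f g) μ) (hf : ∀ i, Measurable (f i)) (hg : ∀ j, Measurable (g j)) :
    IndepFun (fun ω i => f i ω) (fun ω j => g j ω) μ := by
  have hfg : ∀ i, Measurable (Sum.elim f g i) := fun i => by cases i <;> simp [hf, hg]
  have := indep_iSup_of_disjoint (fun i => (hfg i).comap_le) h.iIndep
    isCompl_range_inl_range_inr.disjoint
  rw [iSup_range, iSup_range] at this
  rw [IndepFun_iff_Indep]
  simpa [MeasurableSpace.pi, MeasurableSpace.comap_iSup, MeasurableSpace.comap_comp,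
    Function.comp_def] using this

theorem map_sum_range_succ_eq_gammaMeasure {Ω : Type*} [MeasurableSpace Ω] {P : Measure Ω}
    [IsProbabilityMeasure P] {r : ℝ} (hr : 0 < r) {A : ℕ → Ω → ℝ} (hA : ∀ n, Measurable (A n))
    (hAlaw : ∀ n, P.map (A n) = expMeasure r) (hAindep : iIndepFun A P) (n : ℕ) :
    P.map (fun ω => ∑ i ∈ range (n + 1), A i ω) = gammaMeasure (n + 1) r := by
  induction n with
  | zero => simp only [zero_add, sum_range_one, Nat.cast_zero]; exact hAlaw 0
  | succ n ih =>
    have hsplit : (fun ω => ∑ i ∈ range (n + 1 + 1), A i ω) =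
        (fun ω => ∑ i ∈ range (n + 1), A i ω) + A (n + 1) := by
      ext ω; simp [sum_range_succ _ (n + 1)]
    rw [hsplit, IndepFun.map_add_eq_map_conv_map (by fun_prop) (hA _)
      (hAindep.indepFun_fun_sum_range hA _), ih, hAlaw,
      gammaMeasure_conv_expMeasure (by positivity) hr, Nat.cast_succ]

theorem measurable_apply_randomIndex {Ω β : Type*} [MeasurableSpace Ω] [MeasurableSpace β]
    {S : ℕ → Ω → β} (hS : ∀ n, Measurable (S n)) {N : Ω → ℕ} (hN : Measurable N) :
    Measurable fun ω => S (N ω) ω :=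
  (measurable_from_prod_countable_left (f := fun q : Ω × ℕ => S q.2 q.1) hS).comp
    (measurable_id.prodMk hN)

theorem map_apply_randomIndex_eq_sum {Ω β : Type*} [MeasurableSpace Ω] [MeasurableSpace β]
    {μ : Measure Ω} {S : ℕ → Ω → β} (hS : ∀ n, Measurable (S n)) {N : Ω → ℕ} (hN : Measurable N)
    (hind : ∀ n, IndepFun N (S n) μ) :
    μ.map (fun ω => S (N ω) ω) = Measure.sum fun n => μ (N ⁻¹' {n}) • μ.map (S n) := by
  ext s hs
  have hpre : (fun ω => S (N ω) ω) ⁻¹' s = ⋃ n, N ⁻¹' {n} ∩ S n ⁻¹' s := by ext ω; simp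
  rw [Measure.map_apply (measurable_apply_randomIndex hS hN) hs, Measure.sum_apply _ hs, hpre,
    measure_iUnion (fun m n hmn => ((Set.disjoint_singleton.2 hmn).preimage N).mono
      inter_subset_left inter_subset_left)
      fun n => (hN (measurableSet_singleton n)).inter (hS n hs)]
  congr 1
  ext n
  rw [Measure.smul_apply, Measure.map_apply (hS n) hs,
    (hind n).measure_inter_preimage_eq_mul _ _ (measurableSet_singleton n) hs, smul_eq_mul]

theorem Nat.sInf_eq_iff {s : Set ℕ} {n : ℕ} :
    sInf s = n ↔ (n ∈ s ∧ ∀ i < n, i ∉ s) ∨ (n = 0 ∧ s = ∅) := by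
  rcases s.eq_empty_or_nonempty with rfl | hs
  · simp [eq_comm]
  refine ⟨?_, ?_⟩
  · rintro rfl
    exact .inl ⟨Nat.sInf_mem hs, fun i => Nat.notMem_of_lt_sInf⟩
  · rintro (⟨hn, hlt⟩ | ⟨-, rfl⟩)
    · exact (Nat.sInf_le hn).antisymm (not_lt.1 fun h => hlt _ h (Nat.sInf_mem hs))
    · exact absurd rfl hs.ne_empty

theorem measurable_sInf_setOf {α : Type*} [MeasurableSpace α] {p : ℕ → α → Prop}
    (hp : ∀ n, MeasurableSet {x | p n x}) : Measurable fun x => sInf {n | p n x} := by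
  refine measurable_to_countable' fun n => ?_
  have : (fun x => sInf {n | p n x}) ⁻¹' {n} =
      ({x | p n x} ∩ ⋂ i < n, {x | p i x}ᶜ) ∪ {_x | n = 0} ∩ ⋂ i, {x | p i x}ᶜ := by
    ext x
    simp [Nat.sInf_eq_iff, Set.eq_empty_iff_forall_notMem]
  rw [this]
  exact ((hp n).inter (.biInter (to_countable _) fun i _ => (hp i).compl)).union
    ((MeasurableSet.const _).inter (.iInter fun i => (hp i).compl))

theorem measurable_sInf_sum_range_eq (k : ℕ) :
    Measurable fun x : ℕ → ℕ => sInf {n | ∑ i ∈ range n, x i = k} :=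
  measurable_sInf_setOf fun n => (by fun_prop : Measurable fun x : ℕ → ℕ => ∑ i ∈ range n, x i)
    (measurableSet_singleton k)

theorem sInf_sum_range_eq_succ_iff {x : ℕ → ℕ} {k m : ℕ} (hk : 1 ≤ k) (hxm : x m ≤ 1) :
    sInf {n | ∑ i ∈ range n, x i = k} = m + 1 ↔ ∑ i ∈ range m, x i = k - 1 ∧ x m = 1 := by
  have hmono : ∀ i < m + 1, ∑ j ∈ range i, x j ≤ ∑ j ∈ range m, x j := fun i hi =>
    sum_le_sum_of_subset (range_subset_range.2 (by omega))
  simp only [Nat.sInf_eq_iff, mem_ofPred_eq, Nat.succ_ne_zero, false_and, or_false,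
    sum_range_succ]
  constructor
  · rintro ⟨hsum, hlt⟩
    have := hlt m (by omega)
    omega
  · rintro ⟨hsum, hxm1⟩
    exact ⟨by omega, fun i hi => by have := hmono i hi; omega⟩

section Bernoulli

variable {Ω : Type*} [MeasurableSpace Ω] {P : Measure Ω} [IsProbabilityMeasure P] {p : ℝ}

theorem ae_le_one_of_bernoulli {Y : Ω → ℕ} (hY : Measurable Y) (hp0 : 0 ≤ p) (hp1 : p ≤ 1)
    (hY1 : P {ω | Y ω = 1} = ENNReal.ofReal p) (hY0 : P {ω | Y ω = 0} = ENNReal.ofReal (1 - p)) :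
    ∀ᵐ ω ∂P, Y ω ≤ 1 := by
  have hdisj : Disjoint {ω | Y ω = 0} {ω | Y ω = 1} :=
    disjoint_left.2 fun ω h0 h1 => by simp_all
  have hmeas : MeasurableSet ({ω | Y ω = 0} ∪ {ω | Y ω = 1}) :=
    (hY (measurableSet_singleton 0)).union (hY (measurableSet_singleton 1))
  have hunion : P ({ω | Y ω = 0} ∪ {ω | Y ω = 1}) = 1 := by
    rw [measure_union hdisj (hY (measurableSet_singleton 1)), hY0, hY1,
      ← ENNReal.ofReal_add (by linarith) hp0, sub_add_cancel, ENNReal.ofReal_one]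
  filter_upwards [compl_mem_ae_iff.2 ((prob_compl_eq_zero_iff hmeas).2 hunion)] with ω hω
  simp only [compl_compl, mem_union, mem_ofPred_eq] at hω
  omega

variable {X : ℕ → Ω → ℕ}

theorem measure_sum_range_succ_eq (hX : ∀ n, Measurable (X n)) (hXindep : iIndepFun X P)
    (hp0 : 0 ≤ p) (hp1 : p ≤ 1)
    (hX1 : ∀ n, P {ω | X n ω = 1} = ENNReal.ofReal p)
    (hX0 : ∀ n, P {ω | X n ω = 0} = ENNReal.ofReal (1 - p)) (m j : ℕ) :
    P {ω | ∑ i ∈ range (m + 1), X i ω = j} =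
      P {ω | ∑ i ∈ range m, X i ω = j} * ENNReal.ofReal (1 - p) +
        P {ω | ∑ i ∈ range m, X i ω + 1 = j} * ENNReal.ofReal p := by
  set S : Ω → ℕ := fun ω => ∑ i ∈ range m, X i ω
  have hind : IndepFun S (X m) P := hXindep.indepFun_fun_sum_range hX m
  have hae : {ω | ∑ i ∈ range (m + 1), X i ω = j} =ᵐ[P]
      (S ⁻¹' {j} ∩ X m ⁻¹' {0} ∪ S ⁻¹' {s | s + 1 = j} ∩ X m ⁻¹' {1} : Set Ω) := by
    refine Filter.eventuallyEq_set.2 ?_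
    filter_upwards [ae_le_one_of_bernoulli (hX m) hp0 hp1 (hX1 m) (hX0 m)] with ω hω
    simp only [sum_range_succ, S, mem_ofPred_eq, mem_union, mem_inter_iff, Set.mem_preimage,
      mem_singleton_iff]
    omega
  rw [measure_congr hae, measure_union, hind.measure_inter_preimage_eq_mul _ _ (.of_discrete)
    (.of_discrete), hind.measure_inter_preimage_eq_mul _ _ (.of_discrete) (.of_discrete)]
  · exact congr_arg₂ _ (congrArg _ (hX0 m)) (congrArg _ (hX1 m))
  · exact disjoint_left.2 fun ω h0 h1 => by simp_all
  · exact ((by fun_prop : Measurable S) (.of_discrete)).inter (hX m (.of_discrete))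

theorem measure_sum_range_eq_choose_mul (hX : ∀ n, Measurable (X n)) (hXindep : iIndepFun X P)
    (hp0 : 0 ≤ p) (hp1 : p ≤ 1)
    (hX1 : ∀ n, P {ω | X n ω = 1} = ENNReal.ofReal p)
    (hX0 : ∀ n, P {ω | X n ω = 0} = ENNReal.ofReal (1 - p)) (m j : ℕ) :
    P {ω | ∑ i ∈ range m, X i ω = j} =
      m.choose j * ENNReal.ofReal p ^ j * ENNReal.ofReal (1 - p) ^ (m - j) := by
  induction m generalizing j with
  | zero => cases j <;> simp
  | succ m ih =>
    rw [measure_sum_range_succ_eq hX hXindep hp0 hp1 hX1 hX0]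
    cases j with
    | zero =>
      rw [ih]
      simp [pow_succ]
    | succ i =>
      simp only [Nat.add_right_cancel_iff, ih, Nat.choose_succ_succ', Nat.cast_add,
        Nat.add_sub_add_right]
      rcases lt_or_ge i m with him | him
      · rw [show m - i = m - (i + 1) + 1 by omega]
        ring
      · rw [Nat.choose_eq_zero_of_lt (by omega : m < i + 1), Nat.sub_eq_zero_of_le him,
          Nat.sub_eq_zero_of_le (by omega : m ≤ i + 1)]
        ring

theorem measure_sInf_sum_range_eq_succ (hX : ∀ n, Measurable (X n)) (hXindep : iIndepFun X P)
    (hp0 : 0 ≤ p) (hp1 : p ≤ 1)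
    (hX1 : ∀ n, P {ω | X n ω = 1} = ENNReal.ofReal p)
    (hX0 : ∀ n, P {ω | X n ω = 0} = ENNReal.ofReal (1 - p)) {k : ℕ} (hk : 1 ≤ k) (m : ℕ) :
    P {ω | sInf {n | ∑ i ∈ range n, X i ω = k} = m + 1} =
      m.choose (k - 1) * ENNReal.ofReal p ^ k * ENNReal.ofReal (1 - p) ^ (m - (k - 1)) := by
  set S : Ω → ℕ := fun ω => ∑ i ∈ range m, X i ω
  calc P {ω | sInf {n | ∑ i ∈ range n, X i ω = k} = m + 1}
      = P (S ⁻¹' {k - 1} ∩ X m ⁻¹' {1}) := by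
        refine measure_congr (Filter.eventuallyEq_set.2 ?_)
        filter_upwards [ae_le_one_of_bernoulli (hX m) hp0 hp1 (hX1 m) (hX0 m)] with ω hω
        exact sInf_sum_range_eq_succ_iff hk hω
    _ = P {ω | S ω = k - 1} * P {ω | X m ω = 1} :=
        (hXindep.indepFun_fun_sum_range hX m).measure_inter_preimage_eq_mul _ _
          (.of_discrete) (.of_discrete)
    _ = _ := by
        obtain ⟨j, rfl⟩ : ∃ j, k = j + 1 := ⟨k - 1, by omega⟩
        rw [measure_sum_range_eq_choose_mul hX hXindep hp0 hp1 hX1 hX0, hX1,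
          add_tsub_cancel_right, pow_succ]
        ring

/-- `sInf ∅ = 0`, so this is the event that the partial sums never reach `k`. It is null because
the weights `P {T = m + 1}` already have total mass one, their gamma mixture being a probability
measure. -/
theorem measure_sInf_sum_range_eq_zero (hX : ∀ n, Measurable (X n)) (hXindep : iIndepFun X P)
    (hp0 : 0 < p) (hp1 : p ≤ 1)
    (hX1 : ∀ n, P {ω | X n ω = 1} = ENNReal.ofReal p)
    (hX0 : ∀ n, P {ω | X n ω = 0} = ENNReal.ofReal (1 - p)) {k : ℕ} (hk : 1 ≤ k) :
    P {ω | sInf {n | ∑ i ∈ range n, X i ω = k} = 0} = 0 := by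
  set T : Ω → ℕ := fun ω => sInf {n | ∑ i ∈ range n, X i ω = k}
  have := isProbabilityMeasure_gammaMeasure (a := k) (by positivity) hp0
  have (m : ℕ) := isProbabilityMeasure_gammaMeasure (a := m + 1) (by positivity) one_pos
  have hTsucc : ∀ m, P (T ⁻¹' {m + 1}) = _ :=
    measure_sInf_sum_range_eq_succ hX hXindep hp0.le hp1 hX1 hX0 hk
  have hsucc : ∑' m, P (T ⁻¹' {m + 1}) = 1 := by
    simpa [Measure.sum_apply _ MeasurableSet.univ, hTsucc]
      using congrArg (· univ) (sum_choose_smul_gammaMeasure hp0.le hp1 hk)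
  have htotal : ∑' n, P (T ⁻¹' {n}) = 1 := by
    rw [← measure_iUnion (fun m n hmn => (Set.disjoint_singleton.2 hmn).preimage T)
      fun n => (measurable_sInf_sum_range_eq k).comp (measurable_pi_lambda _ hX)
        (measurableSet_singleton n), iUnion_eq_univ_iff.2 fun ω => ⟨T ω, rfl⟩, measure_univ]
  rw [tsum_eq_zero_add' ENNReal.summable, hsucc] at htotal
  exact (ENNReal.add_left_inj ENNReal.one_ne_top).1 (htotal.trans (zero_add 1).symm)

end Bernoulli

theorem map_sum_range_sInf_eq_gammaMeasure {Ω : Type*} [MeasurableSpace Ω] {P : Measure Ω}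
    [IsProbabilityMeasure P] {p : ℝ} (hp0 : 0 < p) (hp1 : p ≤ 1) {k : ℕ} (hk : 1 ≤ k)
    {X : ℕ → Ω → ℕ} (hX : ∀ n, Measurable (X n)) (hXindep : iIndepFun X P)
    (hX1 : ∀ n, P {ω | X n ω = 1} = ENNReal.ofReal p)
    (hX0 : ∀ n, P {ω | X n ω = 0} = ENNReal.ofReal (1 - p))
    {A : ℕ → Ω → ℝ} (hA : ∀ n, Measurable (A n)) (hAlaw : ∀ n, P.map (A n) = expMeasure 1)
    (hAindep : iIndepFun A P) (hXA : IndepFun (fun ω i => X i ω) (fun ω j => A j ω) P) :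
    P.map (fun ω => ∑ i ∈ range (sInf {n | ∑ i ∈ range n, X i ω = k}), A i ω) =
      gammaMeasure k p := by
  set T : Ω → ℕ := fun ω => sInf {n | ∑ i ∈ range n, X i ω = k}
  have hτ := measurable_sInf_sum_range_eq k
  have hT : Measurable T := hτ.comp (measurable_pi_lambda _ hX)
  have hTind : ∀ n, IndepFun T (fun ω => ∑ i ∈ range n, A i ω) P := fun n =>
    hXA.comp hτ (by fun_prop : Measurable fun a : ℕ → ℝ => ∑ i ∈ range n, a i)
  have hTsucc : ∀ m, P (T ⁻¹' {m + 1}) = _ :=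
    measure_sInf_sum_range_eq_succ hX hXindep hp0.le hp1 hX1 hX0 hk
  have hT0 : P (T ⁻¹' {0}) = 0 := measure_sInf_sum_range_eq_zero hX hXindep hp0 hp1 hX1 hX0 hk
  rw [map_apply_randomIndex_eq_sum (S := fun n ω => ∑ i ∈ range n, A i ω) (fun n => by fun_prop)
    hT hTind, ← sum_choose_smul_gammaMeasure hp0.le hp1 hk]
  ext s hs
  rw [Measure.sum_apply _ hs, Measure.sum_apply _ hs, tsum_eq_zero_add' ENNReal.summable, hT0,
    zero_smul, Measure.coe_zero, Pi.zero_apply, zero_add]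
  congr 1
  ext m
  rw [Measure.smul_apply, Measure.smul_apply, hTsucc,
    map_sum_range_succ_eq_gammaMeasure one_pos hA hAlaw hAindep]

/-- Correctness of the GBAS algorithm: with `X₁, X₂, …` iid Bernoulli(p),
`A₁, A₂, …` iid Exponential(1), all jointly independent, `k ≥ 2`, and
`T = min{n : X₁ + ⋯ + X_n = k}`, the random variable
`R = A₁ + ⋯ + A_T` is Gamma(k, p) distributed, `pR/(k-1) ~ Gamma(k, k-1)`,
and the estimator `p̂ = (k-1)/R` is unbiased: `E[p̂] = p`. -/
theorem gbas_correct {Ω : Type*} [MeasurableSpace Ω]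
    (P : Measure Ω) [IsProbabilityMeasure P]
    (p : ℝ) (hp : p ∈ Set.Ioc (0 : ℝ) 1) (k : ℕ) (hk : 2 ≤ k)
    (X : ℕ → Ω → ℕ) (hXmeas : ∀ n, Measurable (X n))
    (A : ℕ → Ω → ℝ) (hAmeas : ∀ n, Measurable (A n))
    (hX1 : ∀ n, P {ω | X n ω = 1} = ENNReal.ofReal p)
    (hX0 : ∀ n, P {ω | X n ω = 0} = ENNReal.ofReal (1 - p))
    (hAdist : ∀ n, Measure.map (A n) P = expMeasure 1)
    (hindep : iIndepFun
      (Sum.elim (fun n ω => ((X n ω : ℝ))) (fun n ω => A n ω)) P)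
    (T : Ω → ℕ)
    (hT : ∀ ω, T ω = sInf {n | ∑ i ∈ Finset.range n, X i ω = k})
    (R : Ω → ℝ)
    (hR : ∀ ω, R ω = ∑ i ∈ Finset.range (T ω), A i ω) :
    Measure.map R P = gammaMeasure k p ∧
    Measure.map (fun ω => p * R ω / ((k : ℝ) - 1)) P
        = gammaMeasure k ((k : ℝ) - 1) ∧
    ∫ ω, ((k : ℝ) - 1) / R ω ∂P = p := by
  obtain ⟨hp0, hp1⟩ := hp
  have hk1 : (0 : ℝ) < k - 1 := by
    have : (2 : ℝ) ≤ k := mod_cast hk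
    linarith
  have hReq : R = fun ω => ∑ i ∈ range (sInf {n | ∑ i ∈ range n, X i ω = k}), A i ω :=
    funext fun ω => by rw [hR, hT]
  have hXindep : iIndepFun X P := by
    simpa [Function.comp_def] using (hindep.precomp Sum.inl_injective).comp
      (fun _ => Nat.floor) fun _ => Nat.measurable_floor
  have hXA : IndepFun (fun ω i => X i ω) (fun ω j => A j ω) P := by
    simpa [Function.comp_def] using
      (hindep.indepFun_sumElim (fun n => by fun_prop) hAmeas).comp
        (by fun_prop : Measurable fun (y : ℕ → ℝ) (i : ℕ) => ⌊y i⌋₊) measurable_id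
  have hAindep : iIndepFun A P := hindep.precomp (g := Sum.inr) Sum.inr_injective
  have hRlaw : P.map R = gammaMeasure k p := hReq ▸
    map_sum_range_sInf_eq_gammaMeasure hp0 hp1 (by omega) hXmeas hXindep hX1 hX0 hAmeas hAdist
      hAindep hXA
  have hRmeas : Measurable R := hReq ▸ measurable_apply_randomIndex
    (S := fun n ω => ∑ i ∈ range n, A i ω) (fun n => by fun_prop)
    ((measurable_sInf_sum_range_eq k).comp (measurable_pi_lambda _ hXmeas))
  refine ⟨hRlaw, ?_, ?_⟩
  · have := gammaMeasure_map_const_mul (a := k) hp0 (div_pos hp0 hk1)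
    rw [div_div_cancel₀ hp0.ne', ← hRlaw, Measure.map_map (measurable_const_mul _) hRmeas] at this
    convert this using 2
    ext ω
    simp only [Function.comp_apply]
    ring
  · simp_rw [div_eq_mul_inv]
    rw [integral_const_mul, ← integral_map (f := fun x => x⁻¹) hRmeas.aemeasurable (by fun_prop),
      hRlaw, integral_inv_gammaMeasure (by linarith) hp0]
    field_simp
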